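/- Modified resolution of identity: for all φ₁, φ₂ in the span of ψ₁,…,ψ_m, ⟨φ₁, φ₂⟩ = ∫_M ⟨φ₁, φ_μ⟩ ⟨φ_μ, φ₂⟩ χ(μ)² h(μ) dV(μ), where φ_μ is the coherent state at μ. -/

import Mathlib

open Finset MeasureTheory

/-- Modified resolution of identity:
`⟨φ₁, φ₂⟩ = ∫_M ⟨φ₁, φ_μ⟩ ⟨φ_μ, φ₂⟩ χ(μ)² h(μ) dV(μ)`. -/
theorem coherent_state_resolution_of_identity
    {M : Type*} [MeasurableSpace M] (vol : Measure M) (h : M → ℝ)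
    {m : ℕ} (ψ : Fin m → M → ℂ)
    (ip : (M → ℂ) → (M → ℂ) → ℂ)
    (hip : ∀ f g : M → ℂ,
      ip f g = ∫ x, (starRingEnd ℂ) (f x) * g x * (h x : ℂ) ∂vol)
    (hint : ∀ i j, Integrable (fun x => (starRingEnd ℂ) (ψ i x) * ψ j x * (h x : ℂ)) vol)
    (ortho : ∀ i j, ip (ψ i) (ψ j) = if i = j then 1 else 0)
    (χ : M → ℝ)
    (hχ : ∀ μ, χ μ ^ 2 = ∑ i, ‖ψ i μ‖ ^ 2)
    (hχ0 : ∀ᵐ μ ∂vol, χ μ ≠ 0)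
    (φc : M → M → ℂ)
    (hφc : ∀ μ, φc μ = fun ν => (1 / (χ μ : ℂ)) * ∑ i, (starRingEnd ℂ) (ψ i μ) * ψ i ν)
    (φ₁ φ₂ : M → ℂ) (c₁ c₂ : Fin m → ℂ)
    (hφ₁ : φ₁ = fun ν => ∑ i, c₁ i * ψ i ν)
    (hφ₂ : φ₂ = fun ν => ∑ i, c₂ i * ψ i ν) :
    ip φ₁ φ₂ =
      ∫ μ, ip φ₁ (φc μ) * ip (φc μ) φ₂ * ((χ μ : ℂ) ^ 2) * (h μ : ℂ) ∂vol := by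
  have key1 : ∀ μ, ip φ₁ (φc μ) = (1 / (χ μ : ℂ)) * (starRingEnd ℂ) (φ₁ μ) := by
    intro μ
    rw [hip]
    have heq : ∀ x, (starRingEnd ℂ) (φ₁ x) * (φc μ x) * (h x : ℂ)
        = ∑ i, ∑ j, ((starRingEnd ℂ) (c₁ j) * ((1 / (χ μ : ℂ)) * (starRingEnd ℂ) (ψ i μ))) *
            ((starRingEnd ℂ) (ψ j x) * ψ i x * (h x : ℂ)) := by
      intro x
      rw [hφ₁, hφc]
      simp only [map_sum, map_mul, Finset.sum_mul, Finset.mul_sum]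
      apply Finset.sum_congr rfl
      intro i _
      apply Finset.sum_congr rfl
      intro j _
      ring
    rw [MeasureTheory.integral_congr_ae (Filter.Eventually.of_forall heq)]
    rw [MeasureTheory.integral_finset_sum _ (fun i _ => integrable_finset_sum _
      (fun j _ => (hint j i).const_mul _))]
    have : ∀ i ∈ Finset.univ, (∫ x, ∑ j, ((starRingEnd ℂ) (c₁ j) * ((1 / (χ μ : ℂ)) * (starRingEnd ℂ) (ψ i μ))) *
            ((starRingEnd ℂ) (ψ j x) * ψ i x * (h x : ℂ)) ∂vol)
        = (starRingEnd ℂ) (c₁ i) * ((1 / (χ μ : ℂ)) * (starRingEnd ℂ) (ψ i μ)) := by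
      intro i _
      rw [MeasureTheory.integral_finset_sum _ (fun j _ => (hint j i).const_mul _)]
      have : ∀ j ∈ Finset.univ, (∫ x, ((starRingEnd ℂ) (c₁ j) * ((1 / (χ μ : ℂ)) * (starRingEnd ℂ) (ψ i μ))) *
            ((starRingEnd ℂ) (ψ j x) * ψ i x * (h x : ℂ)) ∂vol)
          = ((starRingEnd ℂ) (c₁ j) * ((1 / (χ μ : ℂ)) * (starRingEnd ℂ) (ψ i μ))) * (if j = i then 1 else 0) := by
        intro j _
        rw [MeasureTheory.integral_const_mul, ← hip, ortho]
      rw [Finset.sum_congr rfl this]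
      simp
    rw [Finset.sum_congr rfl this, hφ₁]
    simp only [map_sum, map_mul, Finset.mul_sum]
    apply Finset.sum_congr rfl
    intro j _
    ring
  have key2 : ∀ μ, ip (φc μ) φ₂ = (1 / (χ μ : ℂ)) * φ₂ μ := by
    intro μ
    rw [hip]
    have heq : ∀ x, (starRingEnd ℂ) (φc μ x) * (φ₂ x) * (h x : ℂ)
        = ∑ i, ∑ j, (((1 / (χ μ : ℂ)) * ψ i μ) * c₂ j) *
            ((starRingEnd ℂ) (ψ i x) * ψ j x * (h x : ℂ)) := by
      intro x
      rw [hφ₂, hφc]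
      simp only [map_sum, map_mul, map_div₀, map_one, Complex.conj_conj, Complex.conj_ofReal,
        Finset.sum_mul, Finset.mul_sum]
      rw [Finset.sum_comm]
      apply Finset.sum_congr rfl
      intro i _
      apply Finset.sum_congr rfl
      intro j _
      ring
    rw [MeasureTheory.integral_congr_ae (Filter.Eventually.of_forall heq)]
    rw [MeasureTheory.integral_finset_sum _ (fun i _ => integrable_finset_sum _
      (fun j _ => (hint i j).const_mul _))]
    have : ∀ i ∈ Finset.univ, (∫ x, ∑ j, (((1 / (χ μ : ℂ)) * ψ i μ) * c₂ j) *
            ((starRingEnd ℂ) (ψ i x) * ψ j x * (h x : ℂ)) ∂vol)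
        = ((1 / (χ μ : ℂ)) * ψ i μ) * c₂ i := by
      intro i _
      rw [MeasureTheory.integral_finset_sum _ (fun j _ => (hint i j).const_mul _)]
      have : ∀ j ∈ Finset.univ, (∫ x, (((1 / (χ μ : ℂ)) * ψ i μ) * c₂ j) *
            ((starRingEnd ℂ) (ψ i x) * ψ j x * (h x : ℂ)) ∂vol)
          = (((1 / (χ μ : ℂ)) * ψ i μ) * c₂ j) * (if i = j then 1 else 0) := by
        intro j _
        rw [MeasureTheory.integral_const_mul, ← hip, ortho]
      rw [Finset.sum_congr rfl this]
      simp
    rw [Finset.sum_congr rfl this, hφ₂]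
    simp only [Finset.mul_sum]
    apply Finset.sum_congr rfl
    intro i _
    ring
  have hpt : ∀ᵐ μ ∂vol, ip φ₁ (φc μ) * ip (φc μ) φ₂ * ((χ μ : ℂ) ^ 2) * (h μ : ℂ)
      = (starRingEnd ℂ) (φ₁ μ) * φ₂ μ * (h μ : ℂ) := by
    filter_upwards [hχ0] with μ hμ
    have hc : (χ μ : ℂ) ≠ 0 := by exact_mod_cast Complex.ofReal_ne_zero.mpr hμ
    rw [key1, key2]
    field_simp
  rw [MeasureTheory.integral_congr_ae hpt, hip]
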